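/- arXiv:2502.18396 — 2 statements merged into one kernel-verified Lean document; each statement's English description precedes it below -/
import Mathlib

section
/- Let Δ be a Cohen-Macaulay simplicial forest and let F be a leaf of Δ. Then the subcomplex Δ₁ with F(Δ₁) = F(Δ) ∖ N_Δ[F] is again a Cohen-Macaulay simplicial forest (i.e. Δ₁ is a grafted simplicial forest). -/
open MvPolynomial

/-- A simplicial complex on the vertex set `V`, presented by its set of facets
(the maximal faces).  Every facet is nonempty and no facet contains another. -/
structure SimplicialComplexOn (V : Type) [Fintype V] [DecidableEq V] : Type where
  facets : Finset (Finset V)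
  nonempty_facet : ∀ F ∈ facets, F.Nonempty
  antichain : ∀ F ∈ facets, ∀ G ∈ facets, F ⊆ G → F = G

variable {V : Type} [Fintype V] [DecidableEq V]

/-- `F` is a leaf of the collection of facets `S`: either `F` is the only facet, or
there is a facet `G ≠ F` (a joint) with `F ∩ H ⊆ F ∩ G` for every facet `H ≠ F`. -/
def IsLeafOf (S : Finset (Finset V)) (F : Finset V) : Prop :=
  F ∈ S ∧ ((∀ H ∈ S, H = F) ∨
    ∃ G ∈ S, G ≠ F ∧ ∀ H ∈ S, H ≠ F → F ∩ H ⊆ F ∩ G)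

/-- The forest property for a facet collection: every nonempty subcollection
(i.e. every nonempty subcomplex) has a leaf. -/
def HasLeafProp (S : Finset (Finset V)) : Prop :=
  ∀ T ⊆ S, T.Nonempty → ∃ F, IsLeafOf T F

/-- A good leaf: a facet which is a leaf of every subcomplex containing it. -/
def IsGoodLeafOf (S : Finset (Finset V)) (F : Finset V) : Prop :=
  F ∈ S ∧ ∀ T ⊆ S, F ∈ T → IsLeafOf T F

/-- A special leaf: a leaf `F` such that for all facets `H, H' ≠ F`,
`H ∩ H' ≠ ∅` iff `(H ∩ H') \ F ≠ ∅`. -/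
def IsSpecialLeafOf (S : Finset (Finset V)) (F : Finset V) : Prop :=
  IsLeafOf S F ∧ ∀ H ∈ S, ∀ H' ∈ S, H ≠ F → H' ≠ F →
    ((H ∩ H').Nonempty ↔ ((H ∩ H') \ F).Nonempty)

/-- A matching: a subcollection of the facets that is pairwise disjoint. -/
def IsMatchingOf (S : Finset (Finset V)) (M : Finset (Finset V)) : Prop :=
  M ⊆ S ∧ ∀ F ∈ M, ∀ G ∈ M, F ≠ G → F ∩ G = ∅

/-- The matching number: maximum size of a matching. -/
noncomputable def matchingNumberOf (S : Finset (Finset V)) : ℕ :=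
  sSup {n | ∃ M : Finset (Finset V), IsMatchingOf S M ∧ M.card = n}

/-- The facet collection `S` is grafted: it decomposes as `Fs ∪ Gs` where
(1) every vertex of a `G ∈ Gs` lies in some `F ∈ Fs`, (2) `Fs` is exactly the set
of leaves of `S`, (3) `Fs` and `Gs` are disjoint, (4) the members of `Fs` are
pairwise disjoint, and (5) for each `G ∈ Gs`, deleting the facet `G` leaves a
grafted collection. -/
inductive IsGrafted : Finset (Finset V) → Prop where
  | intro (S Fs Gs : Finset (Finset V))
      (hunion : S = Fs ∪ Gs)
      (hdisj : Disjoint Fs Gs)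
      (hcover : ∀ G ∈ Gs, ∀ v ∈ G, ∃ F ∈ Fs, v ∈ F)
      (hleaves : ∀ F, IsLeafOf S F ↔ F ∈ Fs)
      (hFdisj : ∀ F ∈ Fs, ∀ F' ∈ Fs, F ≠ F' → F ∩ F' = ∅)
      (hrec : ∀ G ∈ Gs, IsGrafted (S.erase G)) :
      IsGrafted S

/-- `S` is the (minimal presentation of the) grafting of the collection `Gs`
with the simplices `Fs`. -/
def IsGraftingDecomp (S Fs Gs : Finset (Finset V)) : Prop :=
  S = Fs ∪ Gs ∧ Disjoint Fs Gs ∧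
  (∀ G ∈ Gs, ∀ v ∈ G, ∃ F ∈ Fs, v ∈ F) ∧
  (∀ F, IsLeafOf S F ↔ F ∈ Fs) ∧
  (∀ F ∈ Fs, ∀ F' ∈ Fs, F ≠ F' → F ∩ F' = ∅) ∧
  (∀ G ∈ Gs, IsGrafted (S.erase G))

/-- A Cohen-Macaulay simplicial forest, combinatorially: a grafted simplicial forest. -/
def IsCMForestFacets (S : Finset (Finset V)) : Prop :=
  HasLeafProp S ∧ IsGrafted S

/-- The closed neighborhood `N[F] = {F} ∪ {G ∈ S : G ≠ F, G ∩ F ≠ ∅}`. -/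
def closedNbhd (S : Finset (Finset V)) (F : Finset V) : Finset (Finset V) :=
  insert F (S.filter fun G => G ≠ F ∧ (G ∩ F).Nonempty)

/-- The contraction of the facet collection `S` on `A`: the minimal members of
`{F \ A : F ∈ S}`. -/
def contraction (S : Finset (Finset V)) (A : Finset V) : Finset (Finset V) :=
  (S.image fun F => F \ A).filter fun F' => ∀ G ∈ S, G \ A ⊆ F' → G \ A = F'

variable (K : Type) [Field K]

/-- The square-free monomial `x_S = ∏_{v ∈ S} x_v`. -/
noncomputable def xMon (S : Finset V) : MvPolynomial V K := ∏ v ∈ S, X v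

/-- The facet ideal `I(Δ) = ⟨x_F : F a facet⟩`. -/
noncomputable def facetIdealOf (S : Finset (Finset V)) : Ideal (MvPolynomial V K) :=
  Ideal.span { p | ∃ F ∈ S, p = xMon K F }

/-- The `k`-th square-free power of an ideal: the ideal generated by all
square-free monomials lying in `I ^ k`. -/
noncomputable def sqfreePow (I : Ideal (MvPolynomial V K)) (k : ℕ) :
    Ideal (MvPolynomial V K) :=
  Ideal.span { p | (∃ S : Finset V, p = xMon K S) ∧ p ∈ I ^ k }

/-- The depth of `R/I` with respect to the homogeneous maximal ideal
`m = ⟨x_v : v ∈ V⟩`: the largest length of an `R/I`-regular sequence of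
elements of `m`. -/
noncomputable def gradedDepth (I : Ideal (MvPolynomial V K)) : ℕ :=
  sSup {n | ∃ rs : List (MvPolynomial V K), rs.length = n ∧
    (∀ r ∈ rs, r ∈ Ideal.span (Set.range (X : V → MvPolynomial V K))) ∧
    RingTheory.Sequence.IsRegular (MvPolynomial V K ⧸ I) rs}

/-- `R/I` is Cohen-Macaulay: its depth equals its Krull dimension. -/
def IsCMQuot (I : Ideal (MvPolynomial V K)) : Prop :=
  ((gradedDepth K I : ℕ∞) : WithBot ℕ∞) = ringKrullDim (MvPolynomial V K ⧸ I)

/-!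
Induct along the recursive definition of grafting. If the leaf `F` meets no other facet,
removing `N[F]` just removes `F`; being a leaf, `F` is one of the grafting simplices, and since it
covers no vertex of another facet, dropping it from them leaves a grafting decomposition of the
rest. Otherwise delete one facet `G` meeting `F` while keeping `F` a leaf: any such facet other
than the joint of `F`, or the joint itself when it is the only one, after which `F` is isolated.
As the grafting simplices are pairwise disjoint, `G` is not one of them, so removing it keeps
the complex grafted, and it does not change the complement of `N[F]`.
-/

section

open Finset

variable {α : Type} [DecidableEq α]

theorem HasLeafProp.mono {S T : Finset (Finset α)} (hS : HasLeafProp S) (hTS : T ⊆ S) :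
    HasLeafProp T :=
  fun U hUT => hS U (hUT.trans hTS)

theorem mem_sdiff_closedNbhd {S : Finset (Finset α)} {F G : Finset α} :
    G ∈ S \ closedNbhd S F ↔ G ∈ S ∧ G ≠ F ∧ Disjoint G F := by
  simp only [closedNbhd, mem_sdiff, mem_insert, mem_filter, ← not_disjoint_iff_nonempty_inter]
  tauto

theorem sdiff_closedNbhd_eq_erase {S : Finset (Finset α)} {F : Finset α}
    (hiso : ∀ G ∈ S, G ≠ F → Disjoint G F) : S \ closedNbhd S F = S.erase F := by
  ext G
  rw [mem_sdiff_closedNbhd, mem_erase]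
  exact ⟨fun ⟨hG, hGF, _⟩ => ⟨hGF, hG⟩, fun ⟨hGF, hG⟩ => ⟨hG, hGF, hiso G hG hGF⟩⟩

theorem erase_sdiff_closedNbhd_erase {S : Finset (Finset α)} {F G : Finset α}
    (hGF : ¬Disjoint G F) :
    S.erase G \ closedNbhd (S.erase G) F = S \ closedNbhd S F := by
  ext H
  rw [mem_sdiff_closedNbhd, mem_sdiff_closedNbhd, mem_erase]
  refine ⟨fun ⟨⟨_, hH⟩, hHF⟩ => ⟨hH, hHF⟩, fun ⟨hH, hHF, hdisj⟩ => ⟨⟨?_, hH⟩, hHF, hdisj⟩⟩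
  rintro rfl
  exact hGF hdisj

theorem isLeafOf_of_forall_disjoint {S : Finset (Finset α)} {F : Finset α} (hF : F ∈ S)
    (hiso : ∀ G ∈ S, G ≠ F → Disjoint G F) : IsLeafOf S F := by
  by_cases hS : ∀ G ∈ S, G = F
  · exact ⟨hF, Or.inl hS⟩
  push Not at hS
  obtain ⟨J, hJ, hJF⟩ := hS
  refine ⟨hF, Or.inr ⟨J, hJ, hJF, fun H hH hHF => ?_⟩⟩
  rw [disjoint_iff_inter_eq_empty.1 (hiso H hH hHF).symm]
  exact empty_subset _

theorem isLeafOf_erase_iff {S : Finset (Finset α)} {F H : Finset α} (hF : F ∈ S)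
    (hiso : ∀ G ∈ S, G ≠ F → Disjoint G F) (hHF : H ≠ F) :
    IsLeafOf (S.erase F) H ↔ IsLeafOf S H := by
  have hHS_iff : H ∈ S.erase F ↔ H ∈ S := by rw [mem_erase]; exact and_iff_right hHF
  constructor
  · rintro ⟨hH, hsingle | ⟨J, hJ, hJH, hjoint⟩⟩
    · refine ⟨hHS_iff.1 hH, Or.inr ⟨F, hF, hHF.symm, fun K hK hKH => ?_⟩⟩
      by_cases hKF : K = F
      · rw [hKF]
      · exact absurd (hsingle K (mem_erase.2 ⟨hKF, hK⟩)) hKH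
    · refine ⟨hHS_iff.1 hH, Or.inr ⟨J, mem_of_mem_erase hJ, hJH, fun K hK hKH => ?_⟩⟩
      by_cases hKF : K = F
      · rw [hKF, disjoint_iff_inter_eq_empty.1 (hiso H (hHS_iff.1 hH) hHF)]
        exact empty_subset _
      · exact hjoint K (mem_erase.2 ⟨hKF, hK⟩) hKH
  · rintro ⟨hH, hsingle | ⟨J, hJ, hJH, hjoint⟩⟩
    · exact absurd (hsingle F hF) hHF.symm
    by_cases hJF : J = F
    · -- `H` meets no other facet, since its intersections lie in `H ∩ F = ∅`
      refine isLeafOf_of_forall_disjoint (hHS_iff.2 hH) fun K hK hKH => ?_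
      have hsub := hjoint K (mem_of_mem_erase hK) hKH
      rw [hJF, disjoint_iff_inter_eq_empty.1 (hiso H hH hHF)] at hsub
      exact disjoint_iff_inter_eq_empty.2 (by rw [inter_comm]; exact subset_empty.1 hsub)
    · exact ⟨hHS_iff.2 hH, Or.inr ⟨J, mem_erase.2 ⟨hJF, hJ⟩, hJH,
        fun K hK hKH => hjoint K (mem_of_mem_erase hK) hKH⟩⟩

theorem IsLeafOf.exists_isLeafOf_erase {S : Finset (Finset α)} {F G₀ : Finset α}
    (hF : IsLeafOf S F) (hG₀ : G₀ ∈ S) (hG₀F : G₀ ≠ F) (hG₀meet : ¬Disjoint G₀ F) :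
    ∃ G ∈ S, ¬Disjoint G F ∧ IsLeafOf (S.erase G) F := by
  obtain ⟨hFS, hsingle | ⟨J, hJ, hJF, hjoint⟩⟩ := hF
  · exact absurd (hsingle G₀ hG₀) hG₀F
  have hJmeet : ¬Disjoint J F := by
    rw [not_disjoint_iff_nonempty_inter, inter_comm] at hG₀meet ⊢
    exact hG₀meet.mono (hjoint G₀ hG₀ hG₀F)
  by_cases hother : ∃ G ∈ S, G ≠ F ∧ ¬Disjoint G F ∧ G ≠ J
  · obtain ⟨G, hG, hGF, hGmeet, hGJ⟩ := hother
    exact ⟨G, hG, hGmeet, mem_erase.2 ⟨hGF.symm, hFS⟩, Or.inr ⟨J, mem_erase.2 ⟨hGJ.symm, hJ⟩,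
      hJF, fun H hH hHF => hjoint H (mem_of_mem_erase hH) hHF⟩⟩
  · -- `J` is the only facet meeting `F`, so `F` becomes isolated once `J` is deleted
    push Not at hother
    refine ⟨J, hJ, hJmeet, isLeafOf_of_forall_disjoint (mem_erase.2 ⟨hJF.symm, hFS⟩) ?_⟩
    intro K hK hKF
    obtain ⟨hKJ, hKS⟩ := mem_erase.1 hK
    by_contra hKmeet
    exact hKJ (hother K hKS hKF hKmeet)

theorem IsGrafted.erase_of_forall_disjoint {S : Finset (Finset α)} (hS : IsGrafted S)
    {F : Finset α} (hF : F ∈ S) (hiso : ∀ G ∈ S, G ≠ F → Disjoint G F) :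
    IsGrafted (S.erase F) := by
  induction hS generalizing F with
  | intro S Fs Gs hunion hdisj hcover hleaves hFdisj _ ih =>
  have hFFs : F ∈ Fs := (hleaves F).1 (isLeafOf_of_forall_disjoint hF hiso)
  have hFGs : F ∉ Gs := disjoint_left.1 hdisj hFFs
  have hGS : ∀ G ∈ Gs, G ∈ S := fun G hG => hunion ▸ mem_union_right _ hG
  refine .intro _ (Fs.erase F) Gs ?_ (hdisj.mono_left (erase_subset _ _)) ?_ ?_
    (fun A hA A' hA' => hFdisj A (mem_of_mem_erase hA) A' (mem_of_mem_erase hA')) ?_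
  · rw [hunion, erase_union_distrib, erase_eq_of_notMem hFGs]
  · intro G hG v hv
    obtain ⟨F', hF', hvF'⟩ := hcover G hG v hv
    refine ⟨F', mem_erase.2 ⟨?_, hF'⟩, hvF'⟩
    rintro rfl
    exact disjoint_left.1 (hiso G (hGS G hG) (ne_of_mem_of_not_mem hG hFGs)) hv hvF'
  · intro H
    by_cases hHF : H = F
    · subst hHF
      exact iff_of_false (fun h => notMem_erase H S h.1) (fun h => (mem_erase.1 h).1 rfl)
    · rw [isLeafOf_erase_iff hF hiso hHF, hleaves, mem_erase, and_iff_right hHF]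
  · intro G hG
    have hGF : G ≠ F := ne_of_mem_of_not_mem hG hFGs
    rw [erase_right_comm]
    exact ih G hG (mem_erase.2 ⟨hGF.symm, hF⟩) fun H hH => hiso H (mem_of_mem_erase hH)

theorem IsGrafted.sdiff_closedNbhd {S : Finset (Finset α)} (hS : IsGrafted S)
    {F : Finset α} (hF : IsLeafOf S F) : IsGrafted (S \ closedNbhd S F) := by
  induction hS generalizing F with
  | intro S Fs Gs hunion hdisj hcover hleaves hFdisj hrec ih =>
  by_cases hiso : ∀ G ∈ S, G ≠ F → Disjoint G F
  · rw [sdiff_closedNbhd_eq_erase hiso]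
    exact (IsGrafted.intro S Fs Gs hunion hdisj hcover hleaves hFdisj hrec).erase_of_forall_disjoint
      hF.1 hiso
  push Not at hiso
  obtain ⟨G₀, hG₀, hG₀F, hG₀meet⟩ := hiso
  obtain ⟨G, hG, hGmeet, hFG⟩ := hF.exists_isLeafOf_erase hG₀ hG₀F hG₀meet
  have hGGs : G ∈ Gs := by
    have hFFs : F ∈ Fs := (hleaves F).1 hF
    rw [hunion, mem_union] at hG
    refine hG.resolve_left fun hGFs => hGmeet ?_
    exact disjoint_iff_inter_eq_empty.2 (hFdisj G hGFs F hFFs (mem_erase.1 hFG.1).1.symm)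
  rw [← erase_sdiff_closedNbhd_erase hGmeet]
  exact ih G hGGs hFG

end

section Statements

variable {V : Type} [Fintype V] [DecidableEq V] (K : Type) [Field K]

theorem stmt10 (Δ : SimplicialComplexOn V)
    (hCM : IsCMForestFacets Δ.facets)
    (F : Finset V) (hF : IsLeafOf Δ.facets F) :
    IsCMForestFacets (Δ.facets \ closedNbhd Δ.facets F) :=
  ⟨hCM.1.mono Finset.sdiff_subset, hCM.2.sdiff_closedNbhd hF⟩

end Statements
end

section
/- Let Δ = ⟨F_1,…,F_r⟩ ∪ ⟨G_1,…,G_s⟩ be a Cohen-Macaulay simplicial forest on vertex set V(Δ) with R = K[x_v : v ∈ V(Δ)]. Suppose F₁ is a special leaf of Δ with F₁ ∩ G_j ≠ ∅ for some j, and set A = ⋂_{j : F₁∩G_j ≠ ∅}(F₁ ∩ G_j). Then for each 2 ≤ k ≤ ν(Δ), ((I(Δ)^{[k]} + ⟨x_{F₁}⟩) : x_A) = I(Δ_A)^{[k]} + ⟨x_{F₁∖A}⟩. -/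
open MvPolynomial

variable {V : Type} [Fintype V] [DecidableEq V]

variable (K : Type) [Field K]

/-!
Both sides are square-free monomial ideals, so each is determined by the up-closed family of
vertex sets `D` with `x_D` in it, and taking the colon by `x_A` replaces `D` by `D ∪ A`. The
`k`-th square-free power of a facet ideal corresponds to the sets containing `k` pairwise disjoint
facets. A matching inside `D ∪ A` shrinks to a matching of the contraction inside `D`. Conversely,
lift a matching `g` of the contraction to facets `H i` with `H i \ A = g i`: if some `H i` is `F₁`
then `F₁ \ A ⊆ D`; otherwise two of the `H i` that meet must, by the special-leaf property, meet
outside `F₁ ⊇ A`, that is inside `g i ∩ g j = ∅`, so the `H i` form a matching inside `D ∪ A`.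
-/

open Finset Function

section Exponent

variable {σ : Type*}

noncomputable def sqfreeExp (T : Finset σ) : σ →₀ ℕ := ∑ v ∈ T, Finsupp.single v 1

variable [DecidableEq σ]

theorem sqfreeExp_apply (T : Finset σ) (v : σ) : sqfreeExp T v = if v ∈ T then 1 else 0 := by
  simp [sqfreeExp, Finsupp.finsetSum_apply, Finsupp.single_apply]

theorem sqfreeExp_le_iff {T : Finset σ} {d : σ →₀ ℕ} : sqfreeExp T ≤ d ↔ T ⊆ d.support := by
  simp only [Finsupp.le_def, sqfreeExp_apply, subset_iff, Finsupp.mem_support_iff]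
  refine ⟨fun h v hv => ?_, fun h v => ?_⟩
  · have := h v; rw [if_pos hv] at this; omega
  · split_ifs with hv
    · have := h hv; omega
    · exact Nat.zero_le _

theorem support_sqfreeExp (T : Finset σ) : (sqfreeExp T).support = T := by
  ext v; simp [sqfreeExp_apply]

theorem support_add_sqfreeExp (d : σ →₀ ℕ) (A : Finset σ) :
    (d + sqfreeExp A).support = d.support ∪ A := by
  ext v; simp [sqfreeExp_apply, or_iff_not_imp_left]

end Exponent

section Monomial

variable {σ : Type}

theorem xMon_eq_monomial (T : Finset σ) : xMon K T = monomial (sqfreeExp T) 1 := by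
  rw [sqfreeExp, monomial_sum_one]; rfl

theorem support_mul_xMon (p : MvPolynomial σ K) (A : Finset σ) :
    (p * xMon K A).support = p.support.map (addRightEmbedding (sqfreeExp A)) := by
  rw [xMon_eq_monomial]
  exact AddMonoidAlgebra.support_coeff_mul_single p _ (by simp) _

theorem mem_span_xMon_iff [DecidableEq σ] {E : Set (Finset σ)} (hE : IsUpperSet E)
    {p : MvPolynomial σ K} : p ∈ Ideal.span (xMon K '' E) ↔ ∀ d ∈ p.support, d.support ∈ E := by
  have hgen : xMon K '' E = (fun d => monomial d (1 : K)) '' (sqfreeExp '' E) := by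
    rw [Set.image_image]; simp only [xMon_eq_monomial]
  simp only [hgen, mem_ideal_span_monomial_image, Set.exists_mem_image, sqfreeExp_le_iff]
  exact forall₂_congr fun d _ => ⟨fun ⟨T, hT, hTd⟩ => hE hTd hT, fun hd => ⟨_, hd, subset_rfl⟩⟩

theorem colon_span_xMon [DecidableEq σ] {E E' : Set (Finset σ)} (hE : IsUpperSet E)
    (hE' : IsUpperSet E') (A : Finset σ) (h : ∀ D, D ∪ A ∈ E ↔ D ∈ E') :
    (Ideal.span (xMon K '' E)).colon (Ideal.span {xMon K A}) = Ideal.span (xMon K '' E') := by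
  ext p
  simp only [Ideal.mem_colon_span_singleton, mem_span_xMon_iff K hE, mem_span_xMon_iff K hE',
    support_mul_xMon, Finset.forall_mem_map, addRightEmbedding_apply, support_add_sqfreeExp, h]

theorem span_xMon_Ici (F : Finset σ) :
    Ideal.span (xMon K '' Set.Ici F) = Ideal.span {xMon K F} := by
  refine le_antisymm (Ideal.span_le.mpr ?_) (Ideal.span_mono ?_)
  · rintro _ ⟨T, hFT, rfl⟩
    exact Ideal.mem_span_singleton.mpr (prod_dvd_prod_of_subset _ _ _ hFT)
  · exact Set.singleton_subset_iff.mpr ⟨F, Set.mem_Ici.mpr le_rfl, rfl⟩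

end Monomial

section Matching

variable {α : Type*}

-- Matchings are `k`-tuples rather than `k`-sets of facets: an empty member of a contraction may
-- then be repeated, just as its monomial `1` may be in `I ^ k`.
def supersetsOfMatchings (S : Finset (Finset α)) (k : ℕ) : Set (Finset α) :=
  {D | ∃ f : Fin k → Finset α, (∀ i, f i ∈ S) ∧ Pairwise (Disjoint on f) ∧ ∀ i, f i ⊆ D}

theorem isUpperSet_supersetsOfMatchings (S : Finset (Finset α)) (k : ℕ) :
    IsUpperSet (supersetsOfMatchings S k) :=
  fun _ _ hDE ⟨f, hfS, hdisj, hfD⟩ => ⟨f, hfS, hdisj, fun i => (hfD i).trans hDE⟩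

theorem disjoint_and_subset_of_sum_sqfreeExp_le [DecidableEq α] {ι : Type*} [Fintype ι]
    {f : ι → Finset α} {T : Finset α} (h : ∑ i, sqfreeExp (f i) ≤ sqfreeExp T) :
    Pairwise (Disjoint on f) ∧ ∀ i, f i ⊆ T := by
  refine ⟨fun i j hij => disjoint_left.mpr fun v hvi hvj => ?_, fun i => ?_⟩
  · have hle := Finsupp.le_def.mp ((add_le_sum (fun _ _ => zero_le)
      (mem_univ i) (mem_univ j) hij).trans h) v
    simp only [Finsupp.add_apply, sqfreeExp_apply, if_pos hvi, if_pos hvj] at hle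
    split_ifs at hle <;> omega
  · have := sqfreeExp_le_iff.mp ((single_le_sum (fun _ _ => zero_le) (mem_univ i)).trans h)
    rwa [support_sqfreeExp] at this

end Matching

section FacetIdeal

variable {σ : Type}

theorem facetIdealOf_pow_le (S : Finset (Finset σ)) (k : ℕ) :
    facetIdealOf K S ^ k ≤ Ideal.span ((fun d => monomial d (1 : K)) ''
      {d | ∃ f : Fin k → Finset σ, (∀ i, f i ∈ S) ∧ d = ∑ i, sqfreeExp (f i)}) := by
  rw [facetIdealOf, Submodule.span_pow]
  refine Submodule.span_mono ?_
  intro p hp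
  obtain ⟨g, rfl⟩ := Set.mem_pow.mp hp
  choose f hfS hf using fun i => (g i).2
  refine ⟨∑ i, sqfreeExp (f i), ⟨f, hfS, rfl⟩, ?_⟩
  simp only [List.prod_ofFn, monomial_sum_one, hf, xMon_eq_monomial]

theorem xMon_mem_facetIdealOf_pow_iff [DecidableEq σ] {S : Finset (Finset σ)} {k : ℕ}
    {T : Finset σ} : xMon K T ∈ facetIdealOf K S ^ k ↔ T ∈ supersetsOfMatchings S k := by
  constructor
  · intro h
    have := facetIdealOf_pow_le K S k h
    rw [xMon_eq_monomial, mem_ideal_span_monomial_image] at this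
    obtain ⟨_, ⟨f, hfS, rfl⟩, hle⟩ := this (sqfreeExp T) (by simp)
    exact ⟨f, hfS, disjoint_and_subset_of_sum_sqfreeExp_le hle⟩
  · rintro ⟨f, hfS, hdisj, hfT⟩
    have hdvd : xMon K (univ.biUnion f) ∣ xMon K T :=
      prod_dvd_prod_of_subset _ _ _ (biUnion_subset.mpr fun i _ => hfT i)
    refine Ideal.mem_of_dvd _ hdvd ?_
    rw [xMon, prod_biUnion (hdisj.set_pairwise _), ← Fin.prod_const]
    exact Ideal.prod_mem_prod fun i _ => Ideal.subset_span ⟨f i, hfS i, rfl⟩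

theorem sqfreePow_facetIdealOf [DecidableEq σ] (S : Finset (Finset σ)) (k : ℕ) :
    sqfreePow K (facetIdealOf K S) k = Ideal.span (xMon K '' supersetsOfMatchings S k) := by
  refine le_antisymm (Ideal.span_le.mpr ?_) (Ideal.span_le.mpr ?_)
  · rintro _ ⟨⟨T, rfl⟩, hT⟩
    exact Ideal.subset_span ⟨T, (xMon_mem_facetIdealOf_pow_iff K).mp hT, rfl⟩
  · rintro _ ⟨T, hT, rfl⟩
    exact Ideal.subset_span ⟨⟨T, rfl⟩, (xMon_mem_facetIdealOf_pow_iff K).mpr hT⟩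

theorem sqfreePow_facetIdealOf_add_span [DecidableEq σ] (S : Finset (Finset σ)) (k : ℕ)
    (F : Finset σ) : sqfreePow K (facetIdealOf K S) k + Ideal.span {xMon K F} =
      Ideal.span (xMon K '' (Set.Ici F ∪ supersetsOfMatchings S k)) := by
  rw [Set.image_union, Ideal.span_union, span_xMon_Ici, sqfreePow_facetIdealOf, sup_comm,
    Submodule.add_eq_sup]

end FacetIdeal

section Contraction

variable {σ : Type} [Fintype σ] [DecidableEq σ]

theorem exists_mem_contraction_subset_sdiff {S : Finset (Finset σ)} {F : Finset σ} (A : Finset σ)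
    (hF : F ∈ S) : ∃ C ∈ contraction S A, C ⊆ F \ A := by
  obtain ⟨C, hCF, hmin⟩ :=
    exists_minimal_le_of_wellFoundedLT (fun C => ∃ G ∈ S, G \ A = C) (F \ A) ⟨F, hF, rfl⟩
  obtain ⟨G, hG, rfl⟩ := hmin.prop
  exact ⟨G \ A, mem_filter.mpr ⟨mem_image_of_mem _ hG,
    fun G' hG' hle => le_antisymm hle (hmin.2 ⟨G', hG', rfl⟩ hle)⟩, hCF⟩

theorem mem_supersetsOfMatchings_contraction {S : Finset (Finset σ)} {A D : Finset σ} {k : ℕ}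
    (h : D ∪ A ∈ supersetsOfMatchings S k) : D ∈ supersetsOfMatchings (contraction S A) k := by
  obtain ⟨f, hfS, hdisj, hfD⟩ := h
  choose C hC hCf using fun i => exists_mem_contraction_subset_sdiff A (hfS i)
  refine ⟨C, hC, fun i j hij => (hdisj hij).mono (hCf i |>.trans sdiff_subset)
    (hCf j |>.trans sdiff_subset), fun i => (hCf i).trans ?_⟩
  exact sdiff_le_iff'.mpr (hfD i)

theorem sdiff_subset_or_mem_supersetsOfMatchings {S : Finset (Finset σ)} {F A D : Finset σ}
    {k : ℕ} (hAF : A ⊆ F)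
    (hsp : ∀ H ∈ S, ∀ H' ∈ S, H ≠ F → H' ≠ F → (H ∩ H').Nonempty → ((H ∩ H') \ F).Nonempty)
    (h : D ∈ supersetsOfMatchings (contraction S A) k) :
    F \ A ⊆ D ∨ D ∪ A ∈ supersetsOfMatchings S k := by
  obtain ⟨g, hgC, hdisj, hgD⟩ := h
  choose H hHS hHg using fun i => mem_image.mp (mem_filter.mp (hgC i)).1
  by_cases hF : ∃ i, H i = F
  · obtain ⟨i, rfl⟩ := hF
    exact Or.inl (hHg i ▸ hgD i)
  simp only [not_exists] at hF
  refine Or.inr ⟨H, hHS, fun i j hij => ?_, fun i => ?_⟩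
  · by_contra hmeet
    obtain ⟨w, hw⟩ := hsp _ (hHS i) _ (hHS j) (hF i) (hF j)
      (not_disjoint_iff_nonempty_inter.mp hmeet)
    simp only [mem_sdiff, mem_inter] at hw
    have hwA : w ∉ A := fun hwA => hw.2 (hAF hwA)
    exact disjoint_left.mp (hdisj hij) (hHg i ▸ mem_sdiff.mpr ⟨hw.1.1, hwA⟩)
      (hHg j ▸ mem_sdiff.mpr ⟨hw.1.2, hwA⟩)
  · exact sdiff_le_iff'.mp (hHg i ▸ hgD i)

theorem mem_Ici_union_supersetsOfMatchings_iff {S : Finset (Finset σ)} {F A : Finset σ}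
    (hAF : A ⊆ F)
    (hsp : ∀ H ∈ S, ∀ H' ∈ S, H ≠ F → H' ≠ F → (H ∩ H').Nonempty → ((H ∩ H') \ F).Nonempty)
    (k : ℕ) (D : Finset σ) :
    D ∪ A ∈ Set.Ici F ∪ supersetsOfMatchings S k ↔
      D ∈ Set.Ici (F \ A) ∪ supersetsOfMatchings (contraction S A) k := by
  simp only [Set.mem_union, Set.mem_Ici]
  constructor
  · exact Or.imp sdiff_le_iff'.mpr mem_supersetsOfMatchings_contraction
  · rintro (h | h)
    · exact Or.inl (sdiff_le_iff'.mp h)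
    · exact (sdiff_subset_or_mem_supersetsOfMatchings hAF hsp h).imp_left sdiff_le_iff'.mp

end Contraction

section Statements

variable {V : Type} [Fintype V] [DecidableEq V] (K : Type) [Field K]

theorem stmt14 (Δ : SimplicialComplexOn V)
    (Gs : Finset (Finset V))
    (F₁ : Finset V) (hspec : IsSpecialLeafOf Δ.facets F₁)
    (A : Finset V)
    (hAdef : A = F₁.filter fun v => ∀ G ∈ Gs, (F₁ ∩ G).Nonempty → v ∈ G) :
    ∀ k : ℕ, 2 ≤ k → k ≤ matchingNumberOf Δ.facets →
      (sqfreePow K (facetIdealOf K Δ.facets) k + Ideal.span {xMon K F₁}).colon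
          (Ideal.span {xMon K A}) =
        sqfreePow K (facetIdealOf K (contraction Δ.facets A)) k +
          Ideal.span {xMon K (F₁ \ A)} := by
  intro k _ _
  have hAF : A ⊆ F₁ := hAdef ▸ filter_subset _ _
  have hsp := fun H hH H' hH' hne hne' => (hspec.2 H hH H' hH' hne hne').mp
  rw [sqfreePow_facetIdealOf_add_span, sqfreePow_facetIdealOf_add_span]
  exact colon_span_xMon K ((isUpperSet_Ici _).union (isUpperSet_supersetsOfMatchings _ _))
    ((isUpperSet_Ici _).union (isUpperSet_supersetsOfMatchings _ _)) A
    (mem_Ici_union_supersetsOfMatchings_iff hAF hsp k)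

end Statements
end
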